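/- arXiv:1706.06034 — 5 statements merged into one kernel-verified Lean document; each statement's English description precedes it below -/
import Mathlib

section
/- Let g be a graded Lie algebra with one-dimensional center, gradation g = ⊕_{k=1}^N g_k, and let l = λZ* with λ ≠ 0 be a nonzero linear functional vanishing off the center, whose associated skew form B_l(X,Y) = l([X,Y]) is non-degenerate on g/z(g). Then for 1 ≤ k ≤ N-1, dim g_{N-k} = dim g_k. -/
/-!
If `y ∈ g_k` pairs trivially with `g_{N-k}` under `B_l`, it pairs trivially with all of `g`,
since `[y, g_j] ⊆ g_{k+j}` and `l` only sees degree `N`. Non-degeneracy then puts `y` in the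
centre `g_N`, which meets `g_k` trivially; so `y ↦ B_l(y, ·)` embeds `g_k` into the dual of
`g_{N-k}`. Exchanging the roles of `k` and `N - k` gives the reverse inequality.
-/

open Module

section

variable {R L : Type*} [CommRing R] [LieRing L] [LieAlgebra R L]

def lieForm (l : L →ₗ[R] R) : LinearMap.BilinForm R L :=
  (LieModule.toEnd R L L : L →ₗ[R] Module.End R L).compr₂ l

@[simp]
theorem lieForm_apply (l : L →ₗ[R] R) (x y : L) : lieForm l x y = l ⁅x, y⁆ := rfl

variable {gr : ℕ → Submodule R L} {N : ℕ} {l : L →ₗ[R] R}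

theorem lie_eq_zero_of_forall_mem_complementary_degree (hspan : ⨆ j, gr j = ⊤)
    (hbr : ∀ k k' : ℕ, ∀ x ∈ gr k, ∀ y ∈ gr k', ⁅x, y⁆ ∈ gr (k + k'))
    (hlvan : ∀ k, k ≠ N → ∀ x ∈ gr k, l x = 0)
    {k : ℕ} (hkN : k ≤ N) {y : L} (hy : y ∈ gr k)
    (hyv : ∀ v ∈ gr (N - k), l ⁅y, v⁆ = 0) (x : L) : l ⁅y, x⁆ = 0 := by
  have hker : ⨆ j, gr j ≤ LinearMap.ker (lieForm l y) := iSup_le fun j x hx => by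
    by_cases hj : j = N - k
    · exact hyv x (hj ▸ hx)
    · exact hlvan (k + j) (by omega) _ (hbr k j y hy x hx)
  exact hker (hspan ▸ Submodule.mem_top)

theorem injective_lieForm_domRestrict₁₂ (hinternal : DirectSum.IsInternal gr)
    (hbr : ∀ k k' : ℕ, ∀ x ∈ gr k, ∀ y ∈ gr k', ⁅x, y⁆ ∈ gr (k + k'))
    (hlvan : ∀ k, k ≠ N → ∀ x ∈ gr k, l x = 0)
    (hnd : ∀ x : L, (∀ y : L, l ⁅x, y⁆ = 0) → x ∈ gr N) {k : ℕ} (hk : k < N) :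
    Function.Injective ((lieForm l).domRestrict₁₂ (gr k) (gr (N - k))) := by
  rw [← LinearMap.ker_eq_bot, LinearMap.ker_eq_bot']
  intro y hy
  have hyN : (y : L) ∈ gr N :=
    hnd y <| lie_eq_zero_of_forall_mem_complementary_degree hinternal.submodule_iSup_eq_top
      hbr hlvan hk.le y.2 fun v hv => by
        simpa [LinearMap.domRestrict₁₂_apply] using LinearMap.congr_fun hy ⟨v, hv⟩
  have hdisj : Disjoint (gr k) (gr N) := hinternal.submodule_iSupIndep.pairwiseDisjoint hk.ne
  exact Subtype.ext (Submodule.disjoint_def.mp hdisj _ y.2 hyN)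

end

theorem finrank_le_finrank_complementary_degree {K L : Type*} [Field K] [LieRing L]
    [LieAlgebra K L] [FiniteDimensional K L] {gr : ℕ → Submodule K L} {N : ℕ} {l : L →ₗ[K] K}
    (hinternal : DirectSum.IsInternal gr)
    (hbr : ∀ k k' : ℕ, ∀ x ∈ gr k, ∀ y ∈ gr k', ⁅x, y⁆ ∈ gr (k + k'))
    (hlvan : ∀ k, k ≠ N → ∀ x ∈ gr k, l x = 0)
    (hnd : ∀ x : L, (∀ y : L, l ⁅x, y⁆ = 0) → x ∈ gr N) {k : ℕ} (hk : k < N) :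
    finrank K (gr k) ≤ finrank K (gr (N - k)) :=
  (LinearMap.finrank_le_finrank_of_injective
    (injective_lieForm_domRestrict₁₂ hinternal hbr hlvan hnd hk)).trans_eq
    Subspace.dual_finrank_eq

theorem graded_flat_orbit_dim_symmetry_general {L : Type*} [LieRing L] [LieAlgebra ℝ L]
    [FiniteDimensional ℝ L]
    (gr : ℕ → Submodule ℝ L) (N : ℕ)
    (hinternal : DirectSum.IsInternal gr)
    (hbr : ∀ k k' : ℕ, ∀ x ∈ gr k, ∀ y ∈ gr k', ⁅x, y⁆ ∈ gr (k + k'))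
    (hcenter : (LieAlgebra.center ℝ L).toSubmodule = gr N)
    (l : L →ₗ[ℝ] ℝ)
    (hlvan : ∀ k, k ≠ N → ∀ x ∈ gr k, l x = 0)
    (hnd : ∀ x : L, (∀ y : L, l ⁅x, y⁆ = 0) → x ∈ (LieAlgebra.center ℝ L).toSubmodule) :
    ∀ k : ℕ, 1 ≤ k → k ≤ N - 1 →
      Module.finrank ℝ (gr (N - k)) = Module.finrank ℝ (gr k) := by
  intro k hk1 hk2
  rw [hcenter] at hnd
  have hle := finrank_le_finrank_complementary_degree hinternal hbr hlvan hnd (k := k) (by omega)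
  have hge := finrank_le_finrank_complementary_degree hinternal hbr hlvan hnd (k := N - k)
    (by omega)
  rw [Nat.sub_sub_self (by omega)] at hge
  omega

/-- Let `g` be a graded Lie algebra with one-dimensional center `z(g) = g_N`, and let
`l` be a nonzero linear functional vanishing on `g_k` for `k ≠ N` (i.e. `l = λZ*`, `λ ≠ 0`),
whose skew form `B_l(X,Y) = l([X,Y])` is non-degenerate on `g/z(g)`. Then
`dim g_{N-k} = dim g_k` for `1 ≤ k ≤ N-1`. -/
theorem graded_flat_orbit_dim_symmetry {L : Type*} [LieRing L] [LieAlgebra ℝ L]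
    [FiniteDimensional ℝ L]
    (gr : ℕ → Submodule ℝ L) (N : ℕ)
    (hinternal : DirectSum.IsInternal gr)
    (h0 : gr 0 = ⊥)
    (htop : ∀ k, N < k → gr k = ⊥)
    (hbr : ∀ k k' : ℕ, ∀ x ∈ gr k, ∀ y ∈ gr k', ⁅x, y⁆ ∈ gr (k + k'))
    (hcenter : (LieAlgebra.center ℝ L).toSubmodule = gr N)
    (hdim : Module.finrank ℝ (gr N) = 1)
    (l : L →ₗ[ℝ] ℝ) (hlne : l ≠ 0)
    (hlvan : ∀ k, k ≠ N → ∀ x ∈ gr k, l x = 0)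
    (hnd : ∀ x : L, (∀ y : L, l ⁅x, y⁆ = 0) → x ∈ (LieAlgebra.center ℝ L).toSubmodule) :
    ∀ k : ℕ, 1 ≤ k → k ≤ N - 1 →
      Module.finrank ℝ (gr (N - k)) = Module.finrank ℝ (gr k) :=
  graded_flat_orbit_dim_symmetry_general gr N hinternal hbr hcenter l hlvan hnd
end

section
/- Let g be a graded Lie algebra with one-dimensional center and gradation g = ⊕_{k=1}^N g_k with N = 2N₀+1 odd, and suppose the flat-orbit condition holds (B_l non-degenerate on g/z(g) for some l = λZ*, λ ≠ 0). Then m := ⊕_{k=N₀+1}^N g_k is an Abelian ideal of g of dimension (dim g + 1)/2, and l vanishes on [m, m]; i.e., m is a polarization for l. -/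
/-!
The bracket adds degrees, so for `k, k' ≥ N₀ + 1` we get `[g_k, g_k'] ⊆ g_{k+k'} = 0` as
`k + k' > N = 2N₀ + 1`: `m` is an abelian ideal. Since `l` only sees degree `N` and the radical of
`B_l` is `g_N`, the pairing `g_k × g_{N-k} → ℝ`, `(x, y) ↦ l [x, y]` is non-degenerate for
`0 < k < N`, whence `dim g_k = dim g_{N-k}`. Summing over the degrees,
`2 dim m = dim g + dim g_N = 2d + 2`.
-/

open Module Finset

theorem two_mul_sum_Icc_eq_sum_range_add {f : ℕ → ℕ} {N N₀ : ℕ} (hN : N = 2 * N₀ + 1)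
    (h0 : f 0 = 0) (hsymm : ∀ k, 0 < k → k < N → f k = f (N - k)) :
    2 * ∑ k ∈ Icc (N₀ + 1) N, f k = ∑ k ∈ range (N + 1), f k + f N := by
  subst hN
  have hsplit : ∑ k ∈ range (2 * N₀ + 1 + 1), f k
      = ∑ k ∈ range (N₀ + 1), f k + ∑ k ∈ Icc (N₀ + 1) (2 * N₀ + 1), f k := by
    rw [← Ico_add_one_right_eq_Icc, sum_range_add_sum_Ico _ (by omega)]
  have hlower : ∑ k ∈ range (N₀ + 1), f k = ∑ k ∈ Icc (N₀ + 1) (2 * N₀), f k := by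
    rw [sum_range_succ', h0, add_zero]
    refine sum_nbij' (fun k => 2 * N₀ - k) (fun k => 2 * N₀ - k) ?_ ?_ ?_ ?_ ?_ <;>
      intro k hk <;> simp only [mem_range, mem_Icc] at hk ⊢ <;> try omega
    rw [hsymm (k + 1) (by omega) (by omega)]
    congr 1
    omega
  rw [hsplit, hlower, sum_Icc_succ_top (by omega)]
  ring

namespace Submodule

variable {K V ι : Type*} [Field K] [AddCommGroup V] [Module K V] [FiniteDimensional K V]

theorem finrank_biSup_eq_sum {p : ι → Submodule K V} (hp : iSupIndep p) (s : Finset ι) :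
    finrank K (⨆ i ∈ s, p i : Submodule K V) = ∑ i ∈ s, finrank K (p i) := by
  classical
  induction s using Finset.induction with
  | empty => simp
  | @insert a s ha ih =>
    have hdisj : Disjoint (p a) (⨆ i ∈ s, p i) :=
      hp.disjoint_biSup (y := (s : Set ι)) (x := a) (by simpa using ha)
    rw [Finset.iSup_insert, sum_insert ha, ← ih, ← finrank_sup_add_finrank_inf_eq, hdisj.eq_bot,
      finrank_bot, add_zero]

theorem finrank_eq_sum_range {p : ℕ → Submodule K V} {N : ℕ} (hp : iSupIndep p)
    (hspan : ⨆ k, p k = ⊤) (htop : ∀ k, N < k → p k = ⊥) :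
    finrank K V = ∑ k ∈ range (N + 1), finrank K (p k) := by
  have hrange : ⨆ k ∈ range (N + 1), p k = ⊤ := by
    refine eq_top_iff.mpr (hspan ▸ iSup_le fun k => ?_)
    by_cases hk : k ≤ N
    · exact le_biSup p (mem_range.mpr (by omega))
    · simp [htop k (by omega)]
  rw [← finrank_biSup_eq_sum hp, hrange, finrank_top]

end Submodule

theorem lie_mem_of_mem_biSup {R L ι : Type*} [CommRing R] [LieRing L] [LieAlgebra R L]
    {p : ι → Submodule R L} {s t : Set ι} {P : Submodule R L}
    (h : ∀ i ∈ s, ∀ j ∈ t, ∀ x ∈ p i, ∀ y ∈ p j, ⁅x, y⁆ ∈ P) {x y : L}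
    (hx : x ∈ ⨆ i ∈ s, p i) (hy : y ∈ ⨆ j ∈ t, p j) : ⁅x, y⁆ ∈ P := by
  have hle : Submodule.map₂ (LieAlgebra.ad R L : L →ₗ[R] Module.End R L)
      (⨆ i ∈ s, p i) (⨆ j ∈ t, p j) ≤ P := by
    simp only [Submodule.map₂_iSup_left, Submodule.map₂_iSup_right, iSup_le_iff,
      Submodule.map₂_le]
    exact fun j hj i hi x hx y hy => by simpa using h i hi j hj x hx y hy
  simpa using Submodule.map₂_le.mp hle x hx y hy

section Graded

variable {K L : Type*} [Field K] [LieRing L] [LieAlgebra K L] {gr : ℕ → Submodule K L} {N : ℕ}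

theorem lie_eq_zero_of_mem_biSup_Icc
    (hbr : ∀ k k' : ℕ, ∀ x ∈ gr k, ∀ y ∈ gr k', ⁅x, y⁆ ∈ gr (k + k'))
    (htop : ∀ k, N < k → gr k = ⊥) {a : ℕ} (ha : N < 2 * a) {x y : L}
    (hx : x ∈ ⨆ k ∈ Set.Icc a N, gr k) (hy : y ∈ ⨆ k ∈ Set.Icc a N, gr k) : ⁅x, y⁆ = 0 := by
  rw [← Submodule.mem_bot K]
  refine lie_mem_of_mem_biSup (fun k hk k' hk' x hx y hy => ?_) hx hy
  rw [← htop (k + k') (by simp only [Set.mem_Icc] at hk hk'; omega)]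
  exact hbr k k' x hx y hy

theorem lie_mem_biSup_Icc (hbr : ∀ k k' : ℕ, ∀ x ∈ gr k, ∀ y ∈ gr k', ⁅x, y⁆ ∈ gr (k + k'))
    (htop : ∀ k, N < k → gr k = ⊥) (hspan : ⨆ k, gr k = ⊤) {a : ℕ} (x : L) {m : L}
    (hm : m ∈ ⨆ k ∈ Set.Icc a N, gr k) : ⁅x, m⁆ ∈ ⨆ k ∈ Set.Icc a N, gr k := by
  have hx : x ∈ ⨆ j ∈ Set.univ, gr j := by simp [hspan]
  refine lie_mem_of_mem_biSup (fun j _ k hk y hy m hm => ?_) hx hm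
  rw [Set.mem_Icc] at hk
  by_cases hle : j + k ≤ N
  · exact le_biSup gr (show j + k ∈ Set.Icc a N from ⟨by omega, hle⟩) (hbr j k y hy m hm)
  · have hym := hbr j k y hy m hm
    rw [htop (j + k) (by omega), Submodule.mem_bot] at hym
    exact hym ▸ zero_mem _

theorem eq_zero_of_forall_lie_eq_zero (hindep : iSupIndep gr) (hspan : ⨆ k, gr k = ⊤)
    (hbr : ∀ k k' : ℕ, ∀ x ∈ gr k, ∀ y ∈ gr k', ⁅x, y⁆ ∈ gr (k + k'))
    {l : L →ₗ[K] K} (hlvan : ∀ k, k ≠ N → ∀ x ∈ gr k, l x = 0)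
    (hrad : ∀ x, (∀ y, l ⁅x, y⁆ = 0) → x ∈ gr N) {k : ℕ} (hk : k < N) {x : L} (hx : x ∈ gr k)
    (hxy : ∀ y ∈ gr (N - k), l ⁅x, y⁆ = 0) : x = 0 := by
  have hker : ⨆ j, gr j ≤ LinearMap.ker (l ∘ₗ LieAlgebra.ad K L x) := by
    refine iSup_le fun j y hy => ?_
    by_cases hj : j = N - k
    · subst hj
      simpa using hxy y hy
    · simpa using hlvan (k + j) (by omega) _ (hbr k j x hx y hy)
  have hxN : x ∈ gr N := hrad x fun y => by
    simpa using hker (hspan ▸ Submodule.mem_top : y ∈ ⨆ j, gr j)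
  exact Submodule.disjoint_def.mp (hindep.pairwiseDisjoint hk.ne) x hx hxN

variable [FiniteDimensional K L]

theorem finrank_le_finrank_sub (hindep : iSupIndep gr) (hspan : ⨆ k, gr k = ⊤)
    (hbr : ∀ k k' : ℕ, ∀ x ∈ gr k, ∀ y ∈ gr k', ⁅x, y⁆ ∈ gr (k + k'))
    {l : L →ₗ[K] K} (hlvan : ∀ k, k ≠ N → ∀ x ∈ gr k, l x = 0)
    (hrad : ∀ x, (∀ y, l ⁅x, y⁆ = 0) → x ∈ gr N) {k : ℕ} (hk : k < N) :
    finrank K (gr k) ≤ finrank K (gr (N - k)) := by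
  let B := ((LieAlgebra.ad K L : L →ₗ[K] Module.End K L).compr₂ l).domRestrict₁₂ (gr k)
    (gr (N - k))
  have hinj : Function.Injective B := by
    rw [← LinearMap.ker_eq_bot, Submodule.eq_bot_iff]
    rintro ⟨x, hx⟩ hB
    refine Subtype.ext (eq_zero_of_forall_lie_eq_zero hindep hspan hbr hlvan hrad hk hx
      fun y hy => ?_)
    simpa [B, LinearMap.domRestrict₁₂_apply] using LinearMap.congr_fun (LinearMap.mem_ker.mp hB) ⟨y, hy⟩
  calc finrank K (gr k) ≤ finrank K (Dual K (gr (N - k))) :=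
        LinearMap.finrank_le_finrank_of_injective hinj
    _ = finrank K (gr (N - k)) := Subspace.dual_finrank_eq

theorem finrank_eq_finrank_sub (hindep : iSupIndep gr) (hspan : ⨆ k, gr k = ⊤)
    (hbr : ∀ k k' : ℕ, ∀ x ∈ gr k, ∀ y ∈ gr k', ⁅x, y⁆ ∈ gr (k + k'))
    {l : L →ₗ[K] K} (hlvan : ∀ k, k ≠ N → ∀ x ∈ gr k, l x = 0)
    (hrad : ∀ x, (∀ y, l ⁅x, y⁆ = 0) → x ∈ gr N) {k : ℕ} (hk0 : 0 < k) (hk : k < N) :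
    finrank K (gr k) = finrank K (gr (N - k)) := by
  refine (finrank_le_finrank_sub hindep hspan hbr hlvan hrad hk).antisymm ?_
  have := finrank_le_finrank_sub hindep hspan hbr hlvan hrad (k := N - k) (by omega)
  rwa [Nat.sub_sub_self hk.le] at this

end Graded

theorem graded_odd_polarization_general {L : Type*} [LieRing L] [LieAlgebra ℝ L]
    [FiniteDimensional ℝ L]
    (gr : ℕ → Submodule ℝ L) (N N₀ d : ℕ)
    (hN : N = 2 * N₀ + 1)
    (hdimL : Module.finrank ℝ L = 2 * d + 1)
    (hinternal : DirectSum.IsInternal gr)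
    (h0 : gr 0 = ⊥)
    (htop : ∀ k, N < k → gr k = ⊥)
    (hbr : ∀ k k' : ℕ, ∀ x ∈ gr k, ∀ y ∈ gr k', ⁅x, y⁆ ∈ gr (k + k'))
    (hcenter : (LieAlgebra.center ℝ L).toSubmodule = gr N)
    (hdim : Module.finrank ℝ (gr N) = 1)
    (l : L →ₗ[ℝ] ℝ)
    (hlvan : ∀ k, k ≠ N → ∀ x ∈ gr k, l x = 0)
    (hnd : ∀ x : L, (∀ y : L, l ⁅x, y⁆ = 0) → x ∈ (LieAlgebra.center ℝ L).toSubmodule) :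
    (∃ I : LieIdeal ℝ L, I.toSubmodule = ⨆ k ∈ Set.Icc (N₀ + 1) N, gr k) ∧
    (∀ x ∈ ⨆ k ∈ Set.Icc (N₀ + 1) N, gr k, ∀ y ∈ ⨆ k ∈ Set.Icc (N₀ + 1) N, gr k,
      ⁅x, y⁆ = 0) ∧
    Module.finrank ℝ (⨆ k ∈ Set.Icc (N₀ + 1) N, gr k : Submodule ℝ L) = d + 1 ∧
    (∀ x ∈ ⨆ k ∈ Set.Icc (N₀ + 1) N, gr k, ∀ y ∈ ⨆ k ∈ Set.Icc (N₀ + 1) N, gr k,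
      l ⁅x, y⁆ = 0) := by
  obtain ⟨hindep, hspan⟩ :=
    (DirectSum.isInternal_submodule_iff_iSupIndep_and_iSup_eq_top gr).mp hinternal
  have hrad : ∀ x : L, (∀ y, l ⁅x, y⁆ = 0) → x ∈ gr N := fun x hx => hcenter ▸ hnd x hx
  have habelian : ∀ x ∈ ⨆ k ∈ Set.Icc (N₀ + 1) N, gr k, ∀ y ∈ ⨆ k ∈ Set.Icc (N₀ + 1) N, gr k,
      ⁅x, y⁆ = 0 := fun x hx y hy => lie_eq_zero_of_mem_biSup_Icc hbr htop (by omega) hx hy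
  have hhalf := two_mul_sum_Icc_eq_sum_range_add (f := fun k => finrank ℝ (gr k)) hN
    (by simp [h0]) fun k hk0 hk => finrank_eq_finrank_sub hindep hspan hbr hlvan hrad hk0 hk
  rw [← Submodule.finrank_eq_sum_range hindep hspan htop, hdimL, hdim] at hhalf
  refine ⟨⟨{ toSubmodule := _, lie_mem := lie_mem_biSup_Icc hbr htop hspan _ }, rfl⟩,
    habelian, ?_, fun x hx y hy => by rw [habelian x hx y hy, map_zero]⟩
  rw [← Finset.coe_Icc, Finset.iSup_coe, Submodule.finrank_biSup_eq_sum hindep]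
  omega

/-- Let `g` be a graded Lie algebra of dimension `2d+1` with one-dimensional center
`z(g) = g_N`, `N = 2N₀+1` odd, satisfying the flat-orbit condition (`B_l` non-degenerate on
`g/z(g)` for `l = λZ*`, `λ ≠ 0`). Then `m = ⊕_{k=N₀+1}^N g_k` is an Abelian ideal of `g` of
dimension `d+1` and `l` vanishes on `[m,m]`: `m` is a polarization for `l`. -/
theorem graded_odd_polarization {L : Type*} [LieRing L] [LieAlgebra ℝ L]
    [FiniteDimensional ℝ L]
    (gr : ℕ → Submodule ℝ L) (N N₀ d : ℕ)
    (hN : N = 2 * N₀ + 1)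
    (hdimL : Module.finrank ℝ L = 2 * d + 1)
    (hinternal : DirectSum.IsInternal gr)
    (h0 : gr 0 = ⊥)
    (htop : ∀ k, N < k → gr k = ⊥)
    (hbr : ∀ k k' : ℕ, ∀ x ∈ gr k, ∀ y ∈ gr k', ⁅x, y⁆ ∈ gr (k + k'))
    (hcenter : (LieAlgebra.center ℝ L).toSubmodule = gr N)
    (hdim : Module.finrank ℝ (gr N) = 1)
    (l : L →ₗ[ℝ] ℝ) (hlne : l ≠ 0)
    (hlvan : ∀ k, k ≠ N → ∀ x ∈ gr k, l x = 0)
    (hnd : ∀ x : L, (∀ y : L, l ⁅x, y⁆ = 0) → x ∈ (LieAlgebra.center ℝ L).toSubmodule) :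
    (∃ I : LieIdeal ℝ L, I.toSubmodule = ⨆ k ∈ Set.Icc (N₀ + 1) N, gr k) ∧
    (∀ x ∈ ⨆ k ∈ Set.Icc (N₀ + 1) N, gr k, ∀ y ∈ ⨆ k ∈ Set.Icc (N₀ + 1) N, gr k,
      ⁅x, y⁆ = 0) ∧
    Module.finrank ℝ (⨆ k ∈ Set.Icc (N₀ + 1) N, gr k : Submodule ℝ L) = d + 1 ∧
    (∀ x ∈ ⨆ k ∈ Set.Icc (N₀ + 1) N, gr k, ∀ y ∈ ⨆ k ∈ Set.Icc (N₀ + 1) N, gr k,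
      l ⁅x, y⁆ = 0) :=
  graded_odd_polarization_general gr N N₀ d hN hdimL hinternal h0 htop hbr hcenter hdim l hlvan hnd
end

section
/- Let G be a locally compact unimodular group (or quotient G/Z of a nilpotent Lie group by its center), π an irreducible unitary square-integrable representation on a Hilbert space H with formal degree d_π, Γ a discrete subset of G with relatively compact fundamental domain Σ (i.e., G is the disjoint union of Σγ, γ ∈ Γ), and w ∈ H a unit vector such that {π(γ)w : γ ∈ Γ} is an orthonormal system. Then {π(γ)w : γ ∈ Γ} is an orthonormal basis of H if and only if μ(Σ)^{-1} = d_π. -/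
/-!
Periodizing the orthogonality relation over the tiling `G = ⨆ γ ∈ Γ, Σγ` gives, for every `v`,
`‖v‖² / d = ∫_Σ ∑_γ |⟪π(γ)w, π(x)⁻¹v⟫|² dx`, and by Bessel the integrand is at most `‖v‖²`.
If the system is a basis, Parseval makes the integrand equal to `‖v‖²`, so `μ(Σ) = 1 / d`.
Conversely, if `μ(Σ) = 1 / d`, then for almost every `x` the integrand equals `‖v‖²`, i.e.
`π(x)⁻¹v` lies in the closed span `M` of the system. To pass from one `v` to all of them, note
that `H` is separable: for an orthonormal family `(eᵢ)` the coefficient functions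
`g ↦ |⟪eᵢ, π(g)w⟫|²` each have integral `1 / d > 0` while their sum is at most `‖w‖²` by Bessel,
so integrating against a finite measure with the same null sets as the σ-finite `μ` shows that
the family is countable. Hence one `x` works for every `v` in a countable dense set `D`, and the
closed subspace `M` contains the dense set `π(x)⁻¹D`, so `M = H`.
-/

open MeasureTheory
open scoped InnerProductSpace ENNReal

theorem enorm_sq_eq_ofReal_norm_sq {E : Type*} [SeminormedAddGroup E] (x : E) :
    ‖x‖ₑ ^ 2 = ENNReal.ofReal (‖x‖ ^ 2) := by
  rw [ENNReal.ofReal_pow (norm_nonneg x), ofReal_norm]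

section Hilbert

variable {𝕜 E ι : Type*} [RCLike 𝕜] [NormedAddCommGroup E] [InnerProductSpace 𝕜 E]

theorem Orthonormal.tsum_enorm_inner_sq {e : ι → E} (he : Orthonormal 𝕜 e) (x : E) :
    ∑' i, ‖⟪e i, x⟫_𝕜‖ₑ ^ 2 = ENNReal.ofReal (∑' i, ‖⟪e i, x⟫_𝕜‖ ^ 2) := by
  rw [ENNReal.ofReal_tsum_of_nonneg (fun _ => by positivity) (he.inner_products_summable x)]
  simp_rw [enorm_sq_eq_ofReal_norm_sq]

theorem Orthonormal.tsum_enorm_inner_sq_le {e : ι → E} (he : Orthonormal 𝕜 e) (x : E) :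
    ∑' i, ‖⟪e i, x⟫_𝕜‖ₑ ^ 2 ≤ ‖x‖ₑ ^ 2 := by
  rw [he.tsum_enorm_inner_sq, enorm_sq_eq_ofReal_norm_sq]
  exact ENNReal.ofReal_le_ofReal (he.tsum_inner_products_le x)

theorem Orthonormal.mem_topologicalClosure_span_of_tsum_enorm_inner_sq_eq [CompleteSpace E]
    {e : ι → E} (he : Orthonormal 𝕜 e) {x : E} (hx : ∑' i, ‖⟪e i, x⟫_𝕜‖ₑ ^ 2 = ‖x‖ₑ ^ 2) :
    x ∈ (Submodule.span 𝕜 (Set.range e)).topologicalClosure := by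
  have : CompleteSpace (Submodule.span 𝕜 (Set.range e)).topologicalClosure :=
    (Submodule.span 𝕜 (Set.range e)).isClosed_topologicalClosure.completeSpace_coe
  set K := (Submodule.span 𝕜 (Set.range e)).topologicalClosure
  have hparseval : ∑' i, ‖⟪e i, x⟫_𝕜‖ ^ 2 = ‖x‖ ^ 2 := by
    rw [he.tsum_enorm_inner_sq, enorm_sq_eq_ofReal_norm_sq] at hx
    exact (ENNReal.ofReal_eq_ofReal_iff (tsum_nonneg fun _ => by positivity)
      (by positivity)).1 hx
  have hinner : ∀ i, ⟪e i, x⟫_𝕜 = ⟪e i, K.starProjection x⟫_𝕜 := fun i => by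
    rw [← Submodule.inner_starProjection_left_eq_right, Submodule.starProjection_eq_self_iff.2
      (Submodule.le_topologicalClosure _ (Submodule.subset_span (Set.mem_range_self i)))]
  have hbessel := he.tsum_inner_products_le (K.starProjection x)
  simp_rw [← hinner, hparseval] at hbessel
  have hperp : Kᗮ.starProjection x = 0 := by
    have := K.norm_sq_eq_add_norm_sq_starProjection x
    exact norm_eq_zero.1 (by nlinarith [norm_nonneg (Kᗮ.starProjection x)])
  rwa [Submodule.starProjection_apply_eq_zero_iff, Submodule.orthogonal_orthogonal] at hperp

theorem HilbertBasis.tsum_enorm_inner_sq (b : HilbertBasis ι 𝕜 E) (x : E) :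
    ∑' i, ‖⟪b i, x⟫_𝕜‖ₑ ^ 2 = ‖x‖ₑ ^ 2 := by
  have h := lp.norm_rpow_eq_tsum (p := 2) (by norm_num) (b.repr x)
  simp only [b.repr.norm_map, b.repr_apply_apply, ENNReal.toReal_ofNat, Real.rpow_two] at h
  rw [b.orthonormal.tsum_enorm_inner_sq, ← h, enorm_sq_eq_ofReal_norm_sq]

theorem HilbertBasis.separableSpace [Countable ι] (b : HilbertBasis ι 𝕜 E) :
    TopologicalSpace.SeparableSpace E := by
  have hsep := (Set.countable_range b).isSeparable.span (R := 𝕜) |>.closure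
  rw [← Submodule.topologicalClosure_coe, b.dense_span, Submodule.top_coe] at hsep
  exact TopologicalSpace.isSeparable_univ_iff.1 hsep

theorem Submodule.eq_top_of_dense_of_forall_map_mem {M : Submodule 𝕜 E}
    (hM : IsClosed (M : Set E)) (f : E ≃ₗᵢ[𝕜] E) {D : Set E} (hD : Dense D)
    (h : ∀ u ∈ D, f u ∈ M) : M = ⊤ := by
  refine Submodule.eq_top_iff'.2 fun y => ?_
  have hsub : closure D ⊆ f ⁻¹' M := closure_minimal h (hM.preimage f.continuous)
  simpa using hsub (hD (f.symm y))

end Hilbert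

theorem countable_of_tsum_le_of_lintegral_ne_zero {α ι : Type*} [MeasurableSpace α]
    {μ : Measure α} [SFinite μ] {f : ι → α → ℝ≥0∞} {C : ℝ≥0∞}
    (hf : ∀ i, AEMeasurable (f i) μ) (hC : C ≠ ∞) (hsum : ∀ x, ∑' i, f i x ≤ C)
    (hpos : ∀ i, ∫⁻ x, f i x ∂μ ≠ 0) : Countable ι := by
  set ν := μ.toFinite
  have hfν : ∀ i, AEMeasurable (f i) ν := fun i => (hf i).mono_ac (toFinite_absolutelyContinuous μ)
  have hposν : ∀ i, ∫⁻ x, f i x ∂ν ≠ 0 := fun i h => hpos i <| by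
    rw [lintegral_eq_zero_iff' (hf i)]
    exact (absolutelyContinuous_toFinite μ).ae_eq ((lintegral_eq_zero_iff' (hfν i)).1 h)
  have hfinite : ∑' i, ∫⁻ x, f i x ∂ν ≠ ∞ := by
    refine ne_top_of_le_ne_top (ENNReal.mul_ne_top hC (measure_ne_top ν Set.univ)) ?_
    rw [ENNReal.tsum_eq_iSup_sum]
    refine iSup_le fun s => ?_
    calc ∑ i ∈ s, ∫⁻ x, f i x ∂ν = ∫⁻ x, ∑ i ∈ s, f i x ∂ν :=
          (lintegral_finsetSum' s fun i _ => hfν i).symm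
      _ ≤ ∫⁻ _, C ∂ν := lintegral_mono fun x => (ENNReal.sum_le_tsum s).trans (hsum x)
      _ = C * ν Set.univ := lintegral_const C
  have := Summable.countable_support_ennreal hfinite
  rw [Function.support_eq_univ hposν] at this
  exact Set.countable_univ_iff.1 this

section FundamentalDomain

variable {G : Type*} [Group G] [MeasurableSpace G] [MeasurableMul G] {μ : Measure G}
  [μ.IsMulRightInvariant] {Γ S : Set G}

theorem lintegral_eq_setLIntegral_tsum_mul_right (hΓ : Γ.Countable) (hS : MeasurableSet S)
    (hfund : ∀ g : G, ∃! γ : G, γ ∈ Γ ∧ g * γ⁻¹ ∈ S) {f : G → ℝ≥0∞} (hf : AEMeasurable f μ) :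
    ∫⁻ g, f g ∂μ = ∫⁻ x in S, ∑' γ : Γ, f (x * γ) ∂μ := by
  have : Countable Γ := hΓ.to_subtype
  have hcover : (⋃ γ : Γ, (· * (γ : G)⁻¹) ⁻¹' S) = Set.univ :=
    Set.iUnion_eq_univ_iff.2 fun g =>
      let ⟨γ, ⟨hγ, hg⟩, _⟩ := hfund g
      ⟨⟨γ, hγ⟩, hg⟩
  have hdisj : Pairwise (Function.onFun Disjoint fun γ : Γ => (· * (γ : G)⁻¹) ⁻¹' S) :=
    fun γ₁ γ₂ hne => Set.disjoint_left.2 fun g h₁ h₂ =>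
      hne (Subtype.ext ((hfund g).unique ⟨γ₁.2, h₁⟩ ⟨γ₂.2, h₂⟩))
  have hf' : ∀ γ : Γ, AEMeasurable (fun x => f (x * γ)) (μ.restrict S) := fun γ =>
    (hf.comp_quasiMeasurePreserving
      (measurePreserving_mul_right μ (γ : G)).quasiMeasurePreserving).restrict
  rw [lintegral_tsum hf']
  calc ∫⁻ g, f g ∂μ = ∫⁻ g in ⋃ γ : Γ, (· * (γ : G)⁻¹) ⁻¹' S, f g ∂μ := by
        rw [hcover, Measure.restrict_univ]
    _ = ∑' γ : Γ, ∫⁻ g in (· * (γ : G)⁻¹) ⁻¹' S, f g ∂μ :=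
        lintegral_iUnion (fun γ => measurable_mul_const _ hS) hdisj f
    _ = ∑' γ : Γ, ∫⁻ x in S, f (x * γ) ∂μ := tsum_congr fun γ => by
        rw [← (measurePreserving_mul_right μ (γ : G)).setLIntegral_comp_preimage_emb
          (measurableEmbedding_mulRight (γ : G))]
        simp only [Set.preimage_preimage, mul_inv_cancel_right, Set.preimage_id']

theorem sigmaFinite_of_countable_of_preimage_mul_right (hΓ : Γ.Countable) (hS : μ S ≠ ∞)
    (hcover : ∀ g : G, ∃ γ ∈ Γ, g * γ⁻¹ ∈ S) : SigmaFinite μ := by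
  refine Measure.sigmaFinite_of_countable (hΓ.image fun γ => (· * γ⁻¹) ⁻¹' S) ?_ ?_
  · rintro _ ⟨γ, -, rfl⟩
    rw [measure_preimage_mul_right]
    exact hS.lt_top
  · refine Set.eq_univ_of_forall fun g => ?_
    obtain ⟨γ, hγ, hg⟩ := hcover g
    exact ⟨_, ⟨γ, hγ, rfl⟩, hg⟩

end FundamentalDomain

section FormalDegree

variable {𝕜 G H ι : Type*} [RCLike 𝕜] [Group G] [MeasurableSpace G]
  [NormedAddCommGroup H] [InnerProductSpace 𝕜 H]

/-- The orthogonality relations of a square-integrable representation with formal degree `d`,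
with the second vector fixed to `w`. -/
def HasFormalDegree (μ : Measure G) (π : G →* (H ≃ₗᵢ[𝕜] H)) (w : H) (d : ℝ) : Prop :=
  ∀ v : H, d * ∫ g, ‖⟪v, π g w⟫_𝕜‖ ^ 2 ∂μ = ‖v‖ ^ 2

namespace HasFormalDegree

variable {μ : Measure G} {π : G →* (H ≃ₗᵢ[𝕜] H)} {w : H} {d : ℝ}

theorem integrable (hπ : HasFormalDegree μ π w d) (v : H) :
    Integrable (fun g => ‖⟪v, π g w⟫_𝕜‖ ^ 2) μ := by
  by_contra hint
  have hv := hπ v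
  rw [integral_undef hint, mul_zero, eq_comm, sq_eq_zero_iff, norm_eq_zero] at hv
  simp [hv] at hint

theorem aemeasurable_enorm_inner_sq (hπ : HasFormalDegree μ π w d) (v : H) :
    AEMeasurable (fun g => ‖⟪v, π g w⟫_𝕜‖ₑ ^ 2) μ := by
  simp_rw [enorm_sq_eq_ofReal_norm_sq]
  exact (hπ.integrable v).aemeasurable.ennreal_ofReal

theorem lintegral_enorm_inner_sq (hπ : HasFormalDegree μ π w d) (hd : d ≠ 0) (v : H) :
    ∫⁻ g, ‖⟪v, π g w⟫_𝕜‖ₑ ^ 2 ∂μ = ENNReal.ofReal (‖v‖ ^ 2 / d) := by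
  simp_rw [enorm_sq_eq_ofReal_norm_sq]
  rw [← ofReal_integral_eq_lintegral_ofReal (hπ.integrable v)
    (ae_of_all _ fun _ => by positivity), ← hπ v, mul_div_cancel_left₀ _ hd]

theorem countable_of_orthonormal [SFinite μ] (hπ : HasFormalDegree μ π w d) (hd : 0 < d)
    {e : ι → H} (he : Orthonormal 𝕜 e) : Countable ι := by
  refine countable_of_tsum_le_of_lintegral_ne_zero (fun i => hπ.aemeasurable_enorm_inner_sq (e i))
    (C := ‖w‖ₑ ^ 2) (by simp) (fun g => ?_) (fun i => ?_)
  · simpa using he.tsum_enorm_inner_sq_le (π g w)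
  · rw [hπ.lintegral_enorm_inner_sq hd.ne', he.1 i]
    simpa using hd

variable [MeasurableMul G] [μ.IsMulRightInvariant] {Γ S : Set G}

theorem ofReal_div_eq_setLIntegral_tsum (hπ : HasFormalDegree μ π w d) (hd : d ≠ 0)
    (hΓ : Γ.Countable) (hS : MeasurableSet S) (hfund : ∀ g : G, ∃! γ : G, γ ∈ Γ ∧ g * γ⁻¹ ∈ S)
    (v : H) :
    ENNReal.ofReal (‖v‖ ^ 2 / d) = ∫⁻ x in S, ∑' γ : Γ, ‖⟪π γ w, (π x).symm v⟫_𝕜‖ₑ ^ 2 ∂μ := by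
  rw [← hπ.lintegral_enorm_inner_sq hd v,
    lintegral_eq_setLIntegral_tsum_mul_right hΓ hS hfund (hπ.aemeasurable_enorm_inner_sq v)]
  refine lintegral_congr fun x => tsum_congr fun γ => ?_
  rw [map_mul, LinearIsometryEquiv.coe_mul, Function.comp_apply,
    ← LinearIsometryEquiv.inner_map_eq_flip]
  simp only [← ofReal_norm, norm_inner_symm]

theorem ae_mem_topologicalClosure_span [CompleteSpace H] (hπ : HasFormalDegree μ π w d)
    (hd : d ≠ 0) (hΓ : Γ.Countable) (hS : MeasurableSet S)
    (hfund : ∀ g : G, ∃! γ : G, γ ∈ Γ ∧ g * γ⁻¹ ∈ S)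
    (hON : Orthonormal 𝕜 fun γ : Γ => π γ w) (hμS : μ S = ENNReal.ofReal (1 / d)) (u : H) :
    ∀ᵐ x ∂μ.restrict S, (π x).symm u ∈
      (Submodule.span 𝕜 (Set.range fun γ : Γ => π γ w)).topologicalClosure := by
  have hbessel : ∀ x, ∑' γ : Γ, ‖⟪π γ w, (π x).symm u⟫_𝕜‖ₑ ^ 2 ≤ ‖u‖ₑ ^ 2 := fun x => by
    simpa using hON.tsum_enorm_inner_sq_le ((π x).symm u)
  have hint : ∫⁻ x in S, ∑' γ : Γ, ‖⟪π γ w, (π x).symm u⟫_𝕜‖ₑ ^ 2 ∂μ = ∫⁻ _ in S, ‖u‖ₑ ^ 2 ∂μ := by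
    rw [← hπ.ofReal_div_eq_setLIntegral_tsum hd hΓ hS hfund, setLIntegral_const, hμS,
      enorm_sq_eq_ofReal_norm_sq, ← ENNReal.ofReal_mul (by positivity),
      mul_one_div]
  have hae := ae_eq_of_ae_le_of_lintegral_le (ae_of_all _ hbessel)
    (by simp [hint, hμS, ENNReal.mul_eq_top]) aemeasurable_const hint.ge
  filter_upwards [hae] with x hx
  exact hON.mem_topologicalClosure_span_of_tsum_enorm_inner_sq_eq (by simpa using hx)

theorem measure_eq_of_topologicalClosure_span_eq_top [CompleteSpace H]
    (hπ : HasFormalDegree μ π w d) (hw : ‖w‖ = 1) (hd : d ≠ 0) (hΓ : Γ.Countable)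
    (hS : MeasurableSet S) (hfund : ∀ g : G, ∃! γ : G, γ ∈ Γ ∧ g * γ⁻¹ ∈ S)
    (hON : Orthonormal 𝕜 fun γ : Γ => π γ w)
    (htop : (Submodule.span 𝕜 (Set.range fun γ : Γ => π γ w)).topologicalClosure = ⊤) :
    μ S = ENNReal.ofReal (1 / d) := by
  have hparseval := (HilbertBasis.mk hON htop.ge).tsum_enorm_inner_sq
  simp only [HilbertBasis.coe_mk] at hparseval
  have hw' : ‖w‖ₑ = 1 := by rw [← ofReal_norm, hw, ENNReal.ofReal_one]
  have h := hπ.ofReal_div_eq_setLIntegral_tsum hd hΓ hS hfund w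
  simpa [hparseval, hw, hw'] using h.symm

theorem topologicalClosure_span_eq_top_of_measure_eq [CompleteSpace H]
    (hπ : HasFormalDegree μ π w d) (hd : 0 < d) (hΓ : Γ.Countable) (hS : MeasurableSet S)
    (hfund : ∀ g : G, ∃! γ : G, γ ∈ Γ ∧ g * γ⁻¹ ∈ S)
    (hON : Orthonormal 𝕜 fun γ : Γ => π γ w) (hμS : μ S = ENNReal.ofReal (1 / d)) :
    (Submodule.span 𝕜 (Set.range fun γ : Γ => π γ w)).topologicalClosure = ⊤ := by
  have : SigmaFinite μ := sigmaFinite_of_countable_of_preimage_mul_right hΓ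
    (hμS ▸ ENNReal.ofReal_ne_top) fun g => (hfund g).exists
  obtain ⟨W, b, -⟩ := exists_hilbertBasis 𝕜 H
  have : Countable W := hπ.countable_of_orthonormal hd b.orthonormal
  have := b.separableSpace
  obtain ⟨D, hD, hDdense⟩ := TopologicalSpace.exists_countable_dense H
  have hae := (ae_ball_iff hD).2 fun u _ =>
    hπ.ae_mem_topologicalClosure_span hd.ne' hΓ hS hfund hON hμS u
  have : (ae (μ.restrict S)).NeBot := ae_neBot.2 (by simp [hμS, hd])
  obtain ⟨x, hx⟩ := hae.exists
  exact Submodule.eq_top_of_dense_of_forall_map_mem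
    (Submodule.isClosed_topologicalClosure _) (π x).symm hDdense hx

end HasFormalDegree

end FormalDegree

theorem onb_iff_covolume_general {G H : Type*} [Group G] [MeasurableSpace G] [MeasurableMul₂ G]
    [NormedAddCommGroup H] [InnerProductSpace ℂ H] [CompleteSpace H]
    (μ : Measure G) [μ.IsMulRightInvariant]
    (π : G →* (H ≃ₗᵢ[ℂ] H)) (w : H) (hw : ‖w‖ = 1)
    (d : ℝ) (hd : 0 < d)
    (hsi : ∀ v : H, d * ∫ g, ‖⟪v, π g w⟫_ℂ‖ ^ 2 ∂μ = ‖v‖ ^ 2)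
    (Γ : Set G) (hΓ : Γ.Countable)
    (Sfd : Set G) (hSm : MeasurableSet Sfd)
    (hfund : ∀ g : G, ∃! γ : G, γ ∈ Γ ∧ g * γ⁻¹ ∈ Sfd)
    (hON : Orthonormal ℂ (fun γ : Γ => π (γ : G) w)) :
    (Submodule.span ℂ (Set.range fun γ : Γ => π (γ : G) w)).topologicalClosure = ⊤ ↔
      (μ Sfd).toReal * d = 1 := by
  have hπ : HasFormalDegree μ π w d := hsi
  constructor
  · intro htop
    rw [hπ.measure_eq_of_topologicalClosure_span_eq_top hw hd.ne' hΓ hSm hfund hON htop]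
    simp [hd.ne', hd.le]
  · intro hcovol
    have hfin : μ Sfd ≠ ⊤ := fun h => by simp [h] at hcovol
    refine hπ.topologicalClosure_span_eq_top_of_measure_eq hd hΓ hSm hfund hON ?_
    rw [← ENNReal.ofReal_toReal hfin, eq_one_div_of_mul_eq_one_left hcovol]

/-- Density lemma: let `π` be an irreducible unitary square-integrable representation of a
locally compact unimodular group `G` with formal degree `d`, `Γ` a discrete subset with
relatively compact fundamental domain `Σ` (so `G = ⊔_{γ∈Γ} Σγ`), and `w` a unit vector with
`{π(γ)w : γ ∈ Γ}` orthonormal. Then `{π(γ)w : γ ∈ Γ}` is an orthonormal basis of `H`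
if and only if `μ(Σ)⁻¹ = d`. -/
theorem onb_iff_covolume {G H : Type*} [Group G] [MeasurableSpace G] [MeasurableMul₂ G]
    [NormedAddCommGroup H] [InnerProductSpace ℂ H] [CompleteSpace H]
    (μ : Measure G) [μ.IsMulRightInvariant]
    (π : G →* (H ≃ₗᵢ[ℂ] H)) (w : H) (hw : ‖w‖ = 1)
    (d : ℝ) (hd : 0 < d)
    (hsi : ∀ v : H, d * ∫ g, ‖⟪v, π g w⟫_ℂ‖ ^ 2 ∂μ = ‖v‖ ^ 2)
    (Γ : Set G) (hΓ : Γ.Countable)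
    (Sfd : Set G) (hSm : MeasurableSet Sfd) (hSfin : μ Sfd ≠ ⊤) (hSpos : μ Sfd ≠ 0)
    (hfund : ∀ g : G, ∃! γ : G, γ ∈ Γ ∧ g * γ⁻¹ ∈ Sfd)
    (hON : Orthonormal ℂ (fun γ : Γ => π (γ : G) w)) :
    (Submodule.span ℂ (Set.range fun γ : Γ => π (γ : G) w)).topologicalClosure = ⊤ ↔
      (μ Sfd).toReal * d = 1 :=
  onb_iff_covolume_general μ π w hw d hd hsi Γ hΓ Sfd hSm hfund hON
end

section
/- Let G be a connected simply connected nilpotent Lie group with Lie algebra g and strong Malcev basis (X_1,…,X_n), and define φ(t_1,…,t_n) = exp(t_1 X_1)⋯exp(t_n X_n). Then Γ = {φ(k) : k ∈ ℤ^n} is a quasi-lattice in G: every g ∈ G has a unique representation g = exp(t_n X_n)⋯exp(t_1 X_1)·γ with t_1,…,t_n ∈ [0,1) and γ ∈ Γ. -/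
/-! Induct on `n`. The first `n - 1` coordinates parametrize a normal subgroup `N`, and every
element factors uniquely as `x * exp(s X_n)` with `x ∈ N`. Splitting `s = t + k` with `t ∈ [0,1)`
and `k ∈ ℤ` and moving `exp(t X_n)` to the front conjugates `x` into another element of `N`, which
the induction hypothesis factors; since `N` is normal this can be undone, which gives uniqueness. -/

open Set Function

section

variable {G : Type*} [Group G]

def HasUniqueFactorization {X Y : Type*} (M : Set G) (σ : X → G) (S : Set X) (γ : Y → G) :
    Prop :=
  ∀ g ∈ M, ∃! p : X × Y, p.1 ∈ S ∧ g = σ p.1 * γ p.2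

namespace HasUniqueFactorization

variable {X Y X' Y' : Type*} {M : Set G} {σ : X → G} {S : Set X} {γ : Y → G}

theorem of_equiv {σ' : X' → G} {S' : Set X'} {γ' : Y' → G} (eX : X ≃ X') (eY : Y ≃ Y')
    (hσ : ∀ x, σ' (eX x) = σ x) (hS : ∀ x, eX x ∈ S' ↔ x ∈ S) (hγ : ∀ y, γ' (eY y) = γ y)
    (h : HasUniqueFactorization M σ S γ) : HasUniqueFactorization M σ' S' γ' := fun g hg =>
  ((eX.prodCongr eY).existsUnique_congr fun p => by simp [hσ, hS, hγ]).mp (h g hg)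

theorem extend {N : Set G} {a : ℝ → G} (ha : ∀ s t, a (s + t) = a s * a t)
    (hM : HasUniqueFactorization M id N a) (hconj : ∀ s, ∀ x ∈ N, a s * x * (a s)⁻¹ ∈ N)
    (hN : HasUniqueFactorization N σ S γ) (hσγ : ∀ x ∈ S, ∀ y, σ x * γ y ∈ N) :
    HasUniqueFactorization M (fun p : ℝ × X => a p.1 * σ p.2) (Ico 0 1 ×ˢ S)
      (fun p : ℤ × Y => γ p.2 * a p.1) := by
  have ha_neg (t : ℝ) : a (-t) = (a t)⁻¹ := by
    refine eq_inv_of_mul_eq_one_left (mul_right_cancel (b := a 0) ?_)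
    rw [← ha, ← ha, neg_add_cancel, zero_add, one_mul]
  intro g hg
  obtain ⟨⟨x, s⟩, ⟨hx, rfl⟩, hM_uniq⟩ := hM g hg
  obtain ⟨⟨x', y⟩, ⟨hx', hxy⟩, hN_uniq⟩ := hN ((a (Int.fract s))⁻¹ * x * a (Int.fract s))
    (by simpa [ha_neg] using hconj (-Int.fract s) x hx)
  refine ⟨((Int.fract s, x'), (⌊s⌋, y)),
    ⟨⟨⟨Int.fract_nonneg s, Int.fract_lt_one s⟩, hx'⟩, ?_⟩, ?_⟩
  · calc id x * a s = a (Int.fract s) * ((a (Int.fract s))⁻¹ * x * a (Int.fract s)) * a ⌊s⌋ := by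
          conv_lhs => rw [← Int.fract_add_floor s, ha]
          dsimp only [id]; group
      _ = _ := by rw [hxy]; group
  · rintro ⟨⟨t', x''⟩, ⟨k, y'⟩⟩ ⟨⟨ht', hx''⟩, hg'⟩
    have hfactor := hM_uniq (a t' * (σ x'' * γ y') * (a t')⁻¹, t' + k)
      ⟨hconj t' _ (hσγ x'' hx'' y'), by rw [hg', ha]; dsimp only [id]; group⟩
    simp only [Prod.mk.injEq] at hfactor
    obtain ⟨hx_eq, rfl⟩ := hfactor
    have hk : ⌊t' + k⌋ = k := by
      rw [Int.floor_add_intCast, Int.floor_eq_zero_iff.mpr ht', zero_add]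
    have ht : Int.fract (t' + k) = t' := by rw [Int.fract_add_intCast, Int.fract_eq_self.mpr ht']
    simp only [ht, hk] at hN_uniq ⊢
    have := hN_uniq (x'', y') ⟨hx'', by rw [← hx_eq]; group⟩
    simp only [Prod.mk.injEq] at this
    rw [this.1, this.2]

end HasUniqueFactorization

def orderedProd {n : ℕ} (e : Fin n → ℝ → G) (t : Fin n → ℝ) : G :=
  (List.ofFn fun i => e i (t i)).prod

def reverseProd {n : ℕ} (e : Fin n → ℝ → G) (t : Fin n → ℝ) : G :=
  (List.ofFn fun i => e i (t i)).reverse.prod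

section OrderedProd

variable {n : ℕ}

theorem orderedProd_snoc (e : Fin (n + 1) → ℝ → G) (t : Fin n → ℝ) (s : ℝ) :
    orderedProd e (Fin.snoc t s) = orderedProd (Fin.init e) t * e (Fin.last n) s := by
  simp only [orderedProd, List.ofFn_succ', List.concat_eq_append, List.prod_append,
    Fin.snoc_castSucc, Fin.snoc_last, List.prod_singleton]
  rfl

theorem reverseProd_snoc (e : Fin (n + 1) → ℝ → G) (t : Fin n → ℝ) (s : ℝ) :
    reverseProd e (Fin.snoc t s) = e (Fin.last n) s * reverseProd (Fin.init e) t := by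
  simp only [reverseProd, List.ofFn_succ', List.concat_eq_append, List.reverse_append,
    List.prod_append, Fin.snoc_castSucc, Fin.snoc_last, List.reverse_singleton, List.prod_singleton]
  rfl

theorem orderedProd_init {e : Fin (n + 1) → ℝ → G} (he : e (Fin.last n) 0 = 1) (t : Fin n → ℝ) :
    orderedProd (Fin.init e) t = orderedProd e (Fin.snoc t 0) := by
  rw [orderedProd_snoc, he, mul_one]

theorem orderedProd_zero {e : Fin n → ℝ → G} (he : ∀ i, e i 0 = 1) : orderedProd e 0 = 1 :=
  List.prod_eq_one <| by simp [he]

theorem mem_range_orderedProd {e : Fin n → ℝ → G} (he : ∀ i, e i 0 = 1) (i : Fin n) (s : ℝ) :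
    e i s ∈ range (orderedProd e) := by
  induction n with
  | zero => exact i.elim0
  | succ n ih =>
    induction i using Fin.lastCases with
    | last =>
      refine ⟨Fin.snoc 0 s, ?_⟩
      rw [orderedProd_snoc, orderedProd_zero (e := Fin.init e) fun i => he _, one_mul]
    | cast j =>
      obtain ⟨t, ht⟩ := ih (fun j => he j.castSucc) j
      exact ⟨Fin.snoc t 0, by rw [← orderedProd_init (he _), ← ht]; rfl⟩

theorem injective_orderedProd_init {e : Fin (n + 1) → ℝ → G} (he : e (Fin.last n) 0 = 1)
    (h : Injective (orderedProd e)) : Injective (orderedProd (Fin.init e)) := by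
  rw [show orderedProd (Fin.init e) = orderedProd e ∘ (Fin.snoc · 0) from
    funext (orderedProd_init he)]
  exact h.comp (Fin.snoc_left_injective (α := fun _ => ℝ) 0)

theorem image_orderedProd_init {e : Fin (n + 1) → ℝ → G} (he : e (Fin.last n) 0 = 1) (m : ℕ) :
    orderedProd (Fin.init e) '' {t | ∀ j : Fin n, m ≤ j → t j = 0} =
      orderedProd e '' {u | ∀ j : Fin (n + 1), min m n ≤ j → u j = 0} := by
  ext g
  constructor
  · rintro ⟨t, ht, rfl⟩
    refine ⟨Fin.snoc t 0, fun j hj => ?_, (orderedProd_init he t).symm⟩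
    induction j using Fin.lastCases with
    | last => exact Fin.snoc_last ..
    | cast j =>
      rw [Fin.snoc_castSucc]
      exact ht j ((min_le_iff.mp hj).resolve_right (by simp))
  · rintro ⟨u, hu, rfl⟩
    refine ⟨Fin.init u, fun j hj => hu _ (by simp [hj]), ?_⟩
    conv_rhs => rw [← Fin.snoc_init_self u, hu (Fin.last n) (by simp)]
    exact orderedProd_init he _

theorem range_orderedProd_init {e : Fin (n + 1) → ℝ → G} (he : e (Fin.last n) 0 = 1) :
    range (orderedProd (Fin.init e)) =
      orderedProd e '' {u | ∀ j : Fin (n + 1), n ≤ j → u j = 0} := by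
  have h := image_orderedProd_init he n
  rw [min_self] at h
  rw [← h, ← image_univ]
  congr 1
  exact (eq_univ_of_forall fun t j hj => absurd j.is_lt hj.not_gt).symm

theorem reverseProd_mem {H : Subgroup G} {e : Fin n → ℝ → G} (he : ∀ i, e i 0 = 1)
    (hH : range (orderedProd e) ⊆ H) (t : Fin n → ℝ) : reverseProd e t ∈ H := by
  refine H.list_prod_mem fun _ hx => ?_
  obtain ⟨i, rfl⟩ := List.mem_ofFn.mp (List.mem_reverse.mp hx)
  exact hH (mem_range_orderedProd he i _)

theorem hasUniqueFactorization_range_orderedProd_last {e : Fin (n + 1) → ℝ → G}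
    (h : Injective (orderedProd e)) :
    HasUniqueFactorization (range (orderedProd e)) id (range (orderedProd (Fin.init e)))
      (e (Fin.last n)) := by
  rintro _ ⟨u, rfl⟩
  refine ⟨(orderedProd (Fin.init e) (Fin.init u), u (Fin.last n)), ⟨mem_range_self _, ?_⟩, ?_⟩
  · rw [id, ← orderedProd_snoc, Fin.snoc_init_self]
  · rintro ⟨_, s⟩ ⟨⟨t, rfl⟩, hu⟩
    obtain rfl : u = Fin.snoc t s := h (hu.trans (orderedProd_snoc e t s).symm)
    simp

end OrderedProd

theorem hasUniqueFactorization_range_orderedProd : ∀ {n : ℕ} (e : Fin n → ℝ → G),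
    (∀ i s t, e i (s + t) = e i s * e i t) → Injective (orderedProd e) →
    (∀ m : ℕ, ∃ H : Subgroup G, H.Normal ∧
      (H : Set G) = orderedProd e '' {t | ∀ j : Fin n, m ≤ j → t j = 0}) →
    HasUniqueFactorization (range (orderedProd e)) (reverseProd e) (univ.pi fun _ => Ico 0 1)
      (fun k => orderedProd e (Int.cast ∘ k))
  | 0, e, _, _, _ => by
    rintro _ ⟨t, rfl⟩
    exact ⟨(t, 0), ⟨fun i => i.elim0, by simp [orderedProd, reverseProd]⟩,
      fun _ _ => Subsingleton.elim _ _⟩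
  | n + 1, e, hone, hinj, hideal => by
    have he (i) : e i 0 = 1 := by simpa using hone i 0 0
    obtain ⟨H, hH, hHrange⟩ := hideal n
    have hN : (H : Set G) = range (orderedProd (Fin.init e)) := by
      rw [hHrange, range_orderedProd_init (he _)]
    have ih := hasUniqueFactorization_range_orderedProd (Fin.init e) (fun i => hone i.castSucc)
      (injective_orderedProd_init (he _) hinj)
      (fun m => by simpa only [image_orderedProd_init (he _)] using hideal (min m n))
    rw [← hN] at ih
    refine (HasUniqueFactorization.extend (hone (Fin.last n))
      (hN ▸ hasUniqueFactorization_range_orderedProd_last hinj)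
      (fun s x hx => hH.conj_mem x hx _) ih ?_).of_equiv
      (Fin.snocEquiv fun _ => ℝ) (Fin.snocEquiv fun _ => ℤ) ?_ ?_ ?_
    · exact fun x _ k =>
        H.mul_mem (reverseProd_mem (fun i => he _) hN.ge x) (hN.ge (mem_range_self _))
    · exact fun p => reverseProd_snoc e p.2 p.1
    · intro p
      simp only [Fin.snocEquiv_apply, mem_univ_pi, mem_prod, Fin.forall_fin_succ',
        Fin.snoc_castSucc, Fin.snoc_last, and_comm]
    · intro p
      change orderedProd e (Int.cast ∘ Fin.snoc p.2 p.1) = _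
      rw [Fin.comp_snoc, orderedProd_snoc]

end

/-- Quasi-lattice from a strong Malcev basis: let `G` be a (connected simply connected
nilpotent Lie) group with one-parameter subgroups `e i` coming from a strong Malcev basis
`(X_1,…,X_n)` — i.e. the coordinate map `φ(t) = exp(t_1X_1)⋯exp(t_nX_n)` is bijective and
for each `m` the set `exp(span(X_1,…,X_m))` is a normal subgroup. Then every `g ∈ G` has a
unique representation `g = exp(t_nX_n)⋯exp(t_1X_1)·γ` with `t ∈ [0,1)^n` and
`γ ∈ Γ = {exp(k_1X_1)⋯exp(k_nX_n) : k ∈ ℤ^n}`. -/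
theorem malcev_quasi_lattice {G : Type*} [Group G] (n : ℕ)
    (e : Fin n → ℝ → G)
    (hone : ∀ (i : Fin n) (s t : ℝ), e i (s + t) = e i s * e i t)
    (φ : (Fin n → ℝ) → G)
    (hφ : ∀ t, φ t = (List.ofFn fun i => e i (t i)).prod)
    (hbij : Function.Bijective φ)
    (hideal : ∀ m : ℕ, ∃ H : Subgroup G, H.Normal ∧
      (H : Set G) = φ '' {t : Fin n → ℝ | ∀ j : Fin n, m ≤ (j : ℕ) → t j = 0}) :
    ∀ g : G, ∃! p : (Fin n → ℝ) × (Fin n → ℤ),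
      (∀ i, p.1 i ∈ Set.Ico (0 : ℝ) 1) ∧
      g = (List.ofFn fun i => e i (p.1 i)).reverse.prod * φ (fun i => (p.2 i : ℝ)) := by
  obtain rfl : φ = orderedProd e := funext hφ
  intro g
  simpa only [mem_univ_pi, reverseProd, Function.comp_def] using
    hasUniqueFactorization_range_orderedProd e hone hbij.1 hideal g (hbij.2 g)
end

section
/- The family of functions on ℝ³ given by (t_1,t_2,t_3) ↦ e^{2πi(t_1ϑ_1+t_2ϑ_2+t_3ϑ_3)} e^{2πi(t_1t_2η_3/(2λ) + t_1η_2(t_3+η_3)/λ)} 1_{[0,1)³}(t_1+η_1, t_2+η_2, t_3+η_3), indexed by ϑ_1,ϑ_2,ϑ_3,η_1,η_2,η_3 ∈ ℤ, forms an orthonormal basis of L²(ℝ³), for any fixed λ ≠ 0. -/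
/-!
The function indexed by `(ϑ, η)` lives on the cell `{t | t + η ∈ [0,1)³}`; distinct `η` give
disjoint cells, and these cells tile `ℝ³`. On a cell the second exponential is a unimodular phase:
it cancels in the inner product of two functions with the same `η`, and in the completeness
argument it can be moved onto the test function. What remains is that the exponentials
`e^{2πi t·ϑ}` form an orthonormal basis of `L²` of a unit cube, which is the Fourier basis of the
torus `ℝ³/ℤ³` pulled back along the measure-preserving bijection between the cube and the torus.
-/

open MeasureTheory Complex Real

open Set UnitAddTorus ComplexConjugate

-- `mFourierBasis` is a Hilbert basis for the Haar probability measure on each circle.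
attribute [local instance] instMeasureSpaceUnitAddCircle instIsProbabilityMeasureUnitAddCircleVolume

namespace UnitAddTorus

variable {d : Type*} [Fintype d]

theorem mFourier_coe_apply (n : d → ℤ) (x : d → ℝ) :
    mFourier n (fun i => (x i : UnitAddCircle)) =
      Complex.exp (((2 * Real.pi * ∑ i, x i * (n i : ℝ) : ℝ) : ℂ) * Complex.I) := by
  simp only [mFourier, ContinuousMap.coe_mk, fourier_coe_apply, ← Complex.exp_sum]
  congr 1
  push_cast
  rw [Finset.mul_sum, Finset.sum_mul]
  refine Finset.sum_congr rfl fun i _ => ?_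
  ring

theorem integral_conj_mFourier_mul_mFourier (m n : d → ℤ) :
    ∫ y, conj (mFourier m y) * mFourier n y = if m = n then 1 else 0 := by
  simp_rw [mul_comm (conj _)]
  rw [← ContinuousMap.inner_toLp]
  exact orthonormal_iff_ite.mp orthonormal_mFourier m n

theorem setIntegral_conj_mFourier_mul_mFourier (a : d → ℝ) (m n : d → ℤ) :
    ∫ x in {x : d → ℝ | ∀ i, x i ∈ Ioc (a i) (a i + 1)},
      conj (mFourier m fun i => (x i : UnitAddCircle)) * mFourier n (fun i => (x i : UnitAddCircle))
      = if m = n then 1 else 0 :=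
  (integral_preimage (fun y => conj (mFourier m y) * mFourier n y) a).symm.trans
    (integral_conj_mFourier_mul_mFourier m n)

theorem ae_eq_zero_of_forall_integral_conj_mFourier_mul_eq_zero {w : UnitAddTorus d → ℂ}
    (hw : MemLp w 2 volume) (h : ∀ n, ∫ y, conj (mFourier n y) * w y = 0) : w =ᵐ[volume] 0 := by
  have hcoeff : ∀ n, mFourierBasis.repr (hw.toLp w) n = 0 := fun n => by
    rw [mFourierBasis_repr, mFourierCoeff, ← h n]
    refine integral_congr_ae ?_
    filter_upwards [hw.coeFn_toLp] with y hy
    rw [hy, mFourier_neg, smul_eq_mul]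
  have hzero : hw.toLp w = 0 := by
    rw [← mFourierBasis.repr.map_eq_zero_iff]
    ext n
    exact hcoeff n
  calc w =ᵐ[volume] hw.toLp w := hw.coeFn_toLp.symm
    _ =ᵐ[volume] 0 := by rw [hzero]; exact Lp.coeFn_zero _ _ _

theorem measurePreserving_coe_restrict (a : d → ℝ) :
    MeasurePreserving (fun (x : d → ℝ) i => (x i : UnitAddCircle))
      (volume.restrict {x | ∀ i, x i ∈ Ioc (a i) (a i + 1)}) volume := by
  have hmeas : Measurable (fun (x : d → ℝ) i => (x i : UnitAddCircle)) := by fun_prop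
  refine ⟨hmeas, Measure.ext fun s hs => ?_⟩
  have := lintegral_preimage (s.indicator 1) a
  rw [lintegral_indicator_one hs] at this
  rw [this, Measure.map_apply hmeas hs, ← lintegral_indicator_one (hmeas hs)]
  rfl

theorem ae_restrict_eq_zero_of_forall_setIntegral_conj_mFourier_mul_eq_zero {a : d → ℝ}
    {v : (d → ℝ) → ℂ} (hv : MemLp v 2 (volume.restrict {x | ∀ i, x i ∈ Ioc (a i) (a i + 1)}))
    (h : ∀ n, ∫ x in {x | ∀ i, x i ∈ Ioc (a i) (a i + 1)},
      conj (mFourier n fun i => (x i : UnitAddCircle)) * v x = 0) :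
    v =ᵐ[volume.restrict {x | ∀ i, x i ∈ Ioc (a i) (a i + 1)}] 0 := by
  set S : Set (d → ℝ) := {x | ∀ i, x i ∈ Ioc (a i) (a i + 1)}
  have hS : MeasurableSet S := MeasurableSet.univ_pi' fun _ => measurableSet_Ioc
  have hmp := measurePreserving_coe_restrict a
  set lift : UnitAddTorus d → d → ℝ := fun y => (measurableEquivPiIoc a y).1
  have hlift : Measurable lift := measurable_subtype_coe.comp (measurableEquivPiIoc a).measurable
  have hlift_coe : ∀ x ∈ S, lift (fun i => (x i : UnitAddCircle)) = x := fun x hx =>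
    funext fun i => AddCircle.equivIoc_coe_of_mem (hx i)
  set w : UnitAddTorus d → ℂ := hv.1.mk v ∘ lift
  have hwv : (fun x => w fun i => (x i : UnitAddCircle)) =ᵐ[volume.restrict S] v := by
    filter_upwards [ae_restrict_mem hS, hv.1.ae_eq_mk] with x hx hvx
    simp only [w, Function.comp_apply, hlift_coe x hx, hvx]
  have hw : MemLp w 2 volume := by
    rw [← hmp.map_eq]
    refine (memLp_map_measure_iff ?_ hmp.measurable.aemeasurable).2 (hv.ae_eq hwv.symm)
    exact (hv.1.stronglyMeasurable_mk.comp_measurable hlift).aestronglyMeasurable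
  have hw0 : w =ᵐ[volume] 0 := by
    refine ae_eq_zero_of_forall_integral_conj_mFourier_mul_eq_zero hw fun n => ?_
    rw [integral_preimage _ a, ← h n]
    exact integral_congr_ae (hwv.mono fun x hx => by simp only [hx])
  exact hwv.symm.trans (hmp.quasiMeasurePreserving.ae_eq_comp hw0)

end UnitAddTorus

namespace TwistedCubeFourier

section Cells

variable {d : Type*}

def cell (η : d → ℤ) : Set (d → ℝ) := (fun t j => t j + (η j : ℝ)) ⁻¹' univ.pi fun _ => Ico 0 1

theorem cell_eq_pi (η : d → ℤ) : cell η = univ.pi fun i => Ico (-(η i : ℝ)) (-η i + 1) := by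
  ext t
  simp only [cell, mem_preimage, mem_univ_pi, mem_Ico]
  exact forall_congr' fun i => by constructor <;> rintro ⟨h1, h2⟩ <;> constructor <;> linarith

theorem measurableSet_cell [Countable d] (η : d → ℤ) : MeasurableSet (cell η) := by
  rw [cell_eq_pi]
  exact MeasurableSet.univ_pi fun _ => measurableSet_Ico

theorem disjoint_cell {η η' : d → ℤ} (h : η ≠ η') : Disjoint (cell η) (cell η') := by
  rw [Set.disjoint_left]
  intro t ht ht'
  obtain ⟨i, hi⟩ := Function.ne_iff.mp h
  have h1 := ht i (mem_univ i)
  have h2 := ht' i (mem_univ i)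
  simp only [mem_Ico] at h1 h2
  have : |((η i - η' i : ℤ) : ℝ)| < 1 := by rw [abs_lt]; push_cast; constructor <;> linarith
  exact hi (sub_eq_zero.mp (Int.abs_lt_one_iff.mp (by exact_mod_cast this)))

theorem iUnion_cell : ⋃ η : d → ℤ, cell η = univ := by
  refine eq_univ_of_forall fun t => mem_iUnion.mpr ⟨fun i => -⌊t i⌋, fun i _ => ?_⟩
  simp only [Int.cast_neg, ← sub_eq_add_neg]
  exact ⟨Int.fract_nonneg (t i), Int.fract_lt_one (t i)⟩

end Cells

variable {d : Type*} [Fintype d]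

theorem cell_ae_eq (η : d → ℤ) :
    cell η =ᵐ[volume] {x : d → ℝ | ∀ i, x i ∈ Ioc (-(η i : ℝ)) (-η i + 1)} := by
  have hIoc : {x : d → ℝ | ∀ i, x i ∈ Ioc (-(η i : ℝ)) (-η i + 1)} =
      univ.pi fun i => Ioc (-(η i : ℝ)) (-η i + 1) := by
    ext
    simp
  rw [cell_eq_pi, hIoc, volume_pi]
  exact Measure.pi_Ico_ae_eq_pi_Icc.trans Measure.pi_Ioc_ae_eq_pi_Icc.symm

noncomputable def twistedCubeFourier (φ : (d → ℤ) → (d → ℝ) → ℂ) (p : (d → ℤ) × (d → ℤ))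
    (t : d → ℝ) : ℂ :=
  Complex.exp (((2 * Real.pi * ∑ j, t j * (p.1 j : ℝ) : ℝ) : ℂ) * Complex.I) * φ p.2 t *
    Set.indicator (Set.univ.pi fun _ : d => Set.Ico (0 : ℝ) 1) (fun _ => (1 : ℂ))
      (fun j => t j + (p.2 j : ℝ))

variable {φ : (d → ℤ) → (d → ℝ) → ℂ}

theorem twistedCubeFourier_apply (p : (d → ℤ) × (d → ℤ)) (t : d → ℝ) :
    twistedCubeFourier φ p t = (cell p.2).indicator
      (fun t => mFourier p.1 (fun i => (t i : UnitAddCircle)) * φ p.2 t) t := by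
  have hcell : t ∈ cell p.2 ↔ (fun j => t j + (p.2 j : ℝ)) ∈ univ.pi fun _ => Ico 0 1 := Iff.rfl
  by_cases ht : t ∈ cell p.2
  · rw [twistedCubeFourier, indicator_of_mem ht, indicator_of_mem (hcell.mp ht), mul_one,
      mFourier_coe_apply]
  · rw [twistedCubeFourier, indicator_of_notMem ht, indicator_of_notMem (hcell.not.mp ht),
      mul_zero]

theorem conj_twistedCubeFourier_mul_of_ne {p q : (d → ℤ) × (d → ℤ)} (h : p.2 ≠ q.2)
    (t : d → ℝ) : conj (twistedCubeFourier φ p t) * twistedCubeFourier φ q t = 0 := by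
  simp only [twistedCubeFourier_apply]
  by_cases hp : t ∈ cell p.2
  · rw [indicator_of_notMem (disjoint_left.mp (disjoint_cell h) hp), mul_zero]
  · rw [indicator_of_notMem hp, map_zero, zero_mul]

theorem conj_twistedCubeFourier_mul_of_eq (hφ : ∀ η t, ‖φ η t‖ = 1) (m n η : d → ℤ)
    (t : d → ℝ) :
    conj (twistedCubeFourier φ (m, η) t) * twistedCubeFourier φ (n, η) t =
      (cell η).indicator (fun t => conj (mFourier m fun i => (t i : UnitAddCircle)) *
        mFourier n (fun i => (t i : UnitAddCircle))) t := by
  simp only [twistedCubeFourier_apply]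
  by_cases ht : t ∈ cell η
  · simp only [indicator_of_mem ht, map_mul]
    calc _ = conj (mFourier m fun i => (t i : UnitAddCircle)) *
          mFourier n (fun i => (t i : UnitAddCircle)) * (conj (φ η t) * φ η t) := by ring
      _ = _ := by rw [conj_mul', hφ]; simp
  · simp [indicator_of_notMem ht]

theorem integral_conj_twistedCubeFourier_mul (hφ : ∀ η t, ‖φ η t‖ = 1)
    (p q : (d → ℤ) × (d → ℤ)) :
    ∫ t, conj (twistedCubeFourier φ p t) * twistedCubeFourier φ q t =
      if p = q then 1 else 0 := by
  obtain ⟨m, η⟩ := p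
  obtain ⟨n, η'⟩ := q
  by_cases hη : η = η'
  · subst hη
    simp_rw [conj_twistedCubeFourier_mul_of_eq hφ]
    rw [integral_indicator (measurableSet_cell η), setIntegral_congr_set (cell_ae_eq η),
      setIntegral_conj_mFourier_mul_mFourier]
    simp
  · simp_rw [conj_twistedCubeFourier_mul_of_ne (p := (m, η)) (q := (n, η')) hη, integral_zero]
    simp [hη]

theorem ae_restrict_cell_eq_zero_of_forall_integral_conj_twistedCubeFourier_mul_eq_zero
    (hφm : ∀ η, AEStronglyMeasurable (φ η) volume) (hφ : ∀ η t, ‖φ η t‖ = 1)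
    {f : (d → ℝ) → ℂ} (hf : MemLp f 2 volume) (η : d → ℤ)
    (h : ∀ n, ∫ t, conj (twistedCubeFourier φ (n, η) t) * f t = 0) :
    f =ᵐ[volume.restrict (cell η)] 0 := by
  set v : (d → ℝ) → ℂ := fun t => conj (φ η t) * f t
  have hv : MemLp v 2 volume :=
    hf.of_le ((hφm η).star.mul hf.1) (Filter.Eventually.of_forall fun t => by simp [v, hφ])
  have hv0 := ae_restrict_eq_zero_of_forall_setIntegral_conj_mFourier_mul_eq_zero
    (hv.restrict _) fun n => by
      rw [← setIntegral_congr_set (cell_ae_eq η), ← integral_indicator (measurableSet_cell η),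
        ← h n]
      refine integral_congr_ae (Filter.Eventually.of_forall fun t => ?_)
      by_cases ht : t ∈ cell η
      · simp only [twistedCubeFourier_apply, indicator_of_mem ht, map_mul, v]
        ring
      · simp [twistedCubeFourier_apply, indicator_of_notMem ht]
  rw [Measure.restrict_congr_set (cell_ae_eq η)]
  filter_upwards [hv0] with t ht
  have hφ0 : conj (φ η t) ≠ 0 := by
    rw [map_ne_zero, ← norm_ne_zero_iff, hφ]
    exact one_ne_zero
  exact (mul_eq_zero.mp ht).resolve_left hφ0

theorem orthonormal_and_dense_of_ae_eq_twistedCubeFourier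
    (hφm : ∀ η, AEStronglyMeasurable (φ η) volume) (hφ : ∀ η t, ‖φ η t‖ = 1)
    (F : (d → ℤ) × (d → ℤ) → Lp ℂ 2 (volume : Measure (d → ℝ)))
    (hF : ∀ p, F p =ᵐ[volume] twistedCubeFourier φ p) :
    Orthonormal ℂ F ∧ (Submodule.span ℂ (Set.range F)).topologicalClosure = ⊤ := by
  have hinner : ∀ p (f : Lp ℂ 2 (volume : Measure (d → ℝ))),
      inner ℂ (F p) f = ∫ t, conj (twistedCubeFourier φ p t) * f t := fun p f => by
    rw [L2.inner_def]
    refine integral_congr_ae ?_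
    filter_upwards [hF p] with t ht
    rw [RCLike.inner_apply, ht, mul_comm]
  refine ⟨orthonormal_iff_ite.mpr fun p q => ?_, ?_⟩
  · rw [hinner, ← integral_conj_twistedCubeFourier_mul hφ p q]
    refine integral_congr_ae ?_
    filter_upwards [hF q] with t ht
    rw [ht]
  · rw [Submodule.topologicalClosure_eq_top_iff, Submodule.eq_bot_iff]
    intro f hf
    have hcell : ∀ η, f =ᵐ[volume.restrict (cell η)] 0 := fun η =>
      ae_restrict_cell_eq_zero_of_forall_integral_conj_twistedCubeFourier_mul_eq_zero hφm hφ
        (Lp.memLp f) η fun n => by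
          rw [← hinner]
          exact (Submodule.mem_orthogonal _ _).mp hf _ (Submodule.subset_span ⟨(n, η), rfl⟩)
    have hf0 : f =ᵐ[volume] 0 := by
      have := (ae_restrict_iUnion_iff cell fun t => (f : (d → ℝ) → ℂ) t = 0).mpr hcell
      rwa [iUnion_cell, Measure.restrict_univ] at this
    exact Lp.eq_zero_iff_ae_eq_zero.mpr hf0

end TwistedCubeFourier

open TwistedCubeFourier in
theorem dynin_folland_orthonormal_basis_general (lam : ℝ)
    (F : (Fin 3 → ℤ) × (Fin 3 → ℤ) → Lp ℂ 2 (volume : Measure (Fin 3 → ℝ)))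
    (hF : ∀ p : (Fin 3 → ℤ) × (Fin 3 → ℤ),
      (F p : (Fin 3 → ℝ) → ℂ) =ᵐ[volume] fun t =>
        Complex.exp (((2 * Real.pi * ∑ j, t j * (p.1 j : ℝ) : ℝ) : ℂ) * Complex.I) *
        Complex.exp (((2 * Real.pi *
            (t 0 * t 1 * (p.2 2 : ℝ) / (2 * lam) +
              t 0 * (p.2 1 : ℝ) * (t 2 + (p.2 2 : ℝ)) / lam) : ℝ) : ℂ) * Complex.I) *
        Set.indicator (Set.univ.pi fun _ : Fin 3 => Set.Ico (0 : ℝ) 1)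
          (fun _ => (1 : ℂ)) (fun j => t j + (p.2 j : ℝ))) :
    Orthonormal ℂ F ∧ (Submodule.span ℂ (Set.range F)).topologicalClosure = ⊤ :=
  orthonormal_and_dense_of_ae_eq_twistedCubeFourier
    (φ := fun η t => Complex.exp (((2 * Real.pi *
      (t 0 * t 1 * (η 2 : ℝ) / (2 * lam) + t 0 * (η 1 : ℝ) * (t 2 + (η 2 : ℝ)) / lam) : ℝ) : ℂ) *
        Complex.I))
    (fun _ => by fun_prop) (fun _ _ => norm_exp_ofReal_mul_I _) F hF

/-- For any fixed `λ ≠ 0`, the family of functions on `ℝ³`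
`t ↦ e^{2πi(t·ϑ)} e^{2πi(t₁t₂η₃/(2λ) + t₁η₂(t₃+η₃)/λ)} 1_{[0,1)³}(t + η)`,
indexed by `(ϑ, η) ∈ ℤ³ × ℤ³`, forms an orthonormal basis of `L²(ℝ³)`.
(Coordinates: `t 0 = t₁`, `t 1 = t₂`, `t 2 = t₃`.) -/
theorem dynin_folland_orthonormal_basis (lam : ℝ) (hlam : lam ≠ 0)
    (F : (Fin 3 → ℤ) × (Fin 3 → ℤ) → Lp ℂ 2 (volume : Measure (Fin 3 → ℝ)))
    (hF : ∀ p : (Fin 3 → ℤ) × (Fin 3 → ℤ),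
      (F p : (Fin 3 → ℝ) → ℂ) =ᵐ[volume] fun t =>
        Complex.exp (((2 * Real.pi * ∑ j, t j * (p.1 j : ℝ) : ℝ) : ℂ) * Complex.I) *
        Complex.exp (((2 * Real.pi *
            (t 0 * t 1 * (p.2 2 : ℝ) / (2 * lam) +
              t 0 * (p.2 1 : ℝ) * (t 2 + (p.2 2 : ℝ)) / lam) : ℝ) : ℂ) * Complex.I) *
        Set.indicator (Set.univ.pi fun _ : Fin 3 => Set.Ico (0 : ℝ) 1)
          (fun _ => (1 : ℂ)) (fun j => t j + (p.2 j : ℝ))) :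
    Orthonormal ℂ F ∧ (Submodule.span ℂ (Set.range F)).topologicalClosure = ⊤ :=
  dynin_folland_orthonormal_basis_general lam F hF
end
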